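/- Under the previous hypotheses (X ⊆ M compact, conv(X) compact, barycenters exist, and some variance-maximizing μ has a unique barycenter), the maximal variance among probability measures on X equals R², where R is the circumradius of X, and every variance-maximizing μ gives full mass to the sphere ∂B(y,R) = {x : d(x,y) = R}, where y is the circumcenter. -/

import Mathlib

/-!
Let `μ₀` be a variance maximizer with unique barycenter `y₀`, and `V = ∫ d²(·, y₀) dμ₀`.
For `x ∈ X` and `0 < t ≤ 1`, moving mass `t` of `μ₀` to `x` cannot increase the variance, so a
barycenter `b` of the perturbed measure satisfies
`(1 - t) ∫ d²(·, b) dμ₀ + t d²(x, b) ≤ V ≤ ∫ d²(·, b) dμ₀`, whence `d(x, b)² ≤ V`.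
These barycenters lie in a compact set, and as `t → 0` their limit points are barycenters of
`μ₀`, hence equal to `y₀`; so `d(x, y₀)² ≤ V` on `X`, i.e. `R² ≤ Var μ₀`. Conversely
`Var μ ≤ ∫ d²(·, y) dμ ≤ R²` for every `μ` on `X`, and equality forces `d(·, y) = R` a.e.
-/

open MeasureTheory

/-- The variance of `μ`: the infimum over `y ∈ M` of `∫ d²(x,y) dμ(x)`. -/
noncomputable def varE {M : Type*} [MetricSpace M] [MeasurableSpace M]
    (μ : Measure M) : ENNReal :=
  ⨅ y : M, ∫⁻ x, ENNReal.ofReal (dist x y ^ 2) ∂μ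

open Filter Topology Bornology

section MixDirac

variable {M : Type*} [MeasurableSpace M] {μ : Measure M} {t : ℝ} {x : M}

noncomputable def mixDirac (μ : Measure M) (t : ℝ) (x : M) : Measure M :=
  ENNReal.ofReal (1 - t) • μ + ENNReal.ofReal t • Measure.dirac x

lemma isProbabilityMeasure_mixDirac [IsProbabilityMeasure μ] (ht0 : 0 ≤ t) (ht1 : t ≤ 1) :
    IsProbabilityMeasure (mixDirac μ t x) := by
  constructor
  simp only [mixDirac, Measure.add_apply, Measure.smul_apply, smul_eq_mul, measure_univ, mul_one]
  rw [← ENNReal.ofReal_add (by linarith) ht0]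
  norm_num

lemma mixDirac_compl_eq_zero {X : Set M} (hX : MeasurableSet X) (hμX : μ Xᶜ = 0) (hx : x ∈ X) :
    mixDirac μ t x Xᶜ = 0 := by
  simp [mixDirac, hμX, Measure.dirac_apply' _ hX.compl, hx]

lemma integral_mixDirac {f : M → ℝ} (hf : Integrable f μ) (hfm : StronglyMeasurable f)
    (ht0 : 0 ≤ t) (ht1 : t ≤ 1) :
    ∫ a, f a ∂(mixDirac μ t x) = (1 - t) * ∫ a, f a ∂μ + t * f x := by
  have hdirac : Integrable f (Measure.dirac x) := integrable_dirac' hfm (by simp)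
  rw [mixDirac, integral_add_measure (hf.smul_measure ENNReal.ofReal_ne_top)
    (hdirac.smul_measure ENNReal.ofReal_ne_top), integral_smul_measure, integral_smul_measure,
    integral_dirac' f x hfm, ENNReal.toReal_ofReal (by linarith), ENNReal.toReal_ofReal ht0,
    smul_eq_mul, smul_eq_mul]

end MixDirac

section PseudoMetric

variable {M : Type*} [PseudoMetricSpace M]

def IsBarycenter [MeasurableSpace M] (μ : Measure M) (y : M) : Prop :=
  ∀ z : M, ∫ x, dist x y ^ 2 ∂μ ≤ ∫ x, dist x z ^ 2 ∂μ

noncomputable def farthestDist (X : Set M) (y : M) : ENNReal :=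
  ⨆ x ∈ X, ENNReal.ofReal (dist x y)

lemma continuous_dist_sq (z : M) : Continuous fun a : M => dist a z ^ 2 :=
  (continuous_id.dist continuous_const).pow 2

lemma farthestDist_ne_top {X : Set M} (hX : IsBounded X) (y : M) : farthestDist X y ≠ ⊤ := by
  obtain ⟨r, hr⟩ := (Metric.isBounded_iff_subset_closedBall y).mp hX
  refine ne_top_of_le_ne_top (ENNReal.ofReal_ne_top (r := r)) (iSup₂_le fun x hx => ?_)
  exact ENNReal.ofReal_le_ofReal (Metric.mem_closedBall.mp (hr hx))

lemma farthestDist_sq_le_ofReal {X : Set M} {y : M} {V : ℝ} (hV : 0 ≤ V)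
    (h : ∀ x ∈ X, dist x y ^ 2 ≤ V) : farthestDist X y ^ 2 ≤ ENNReal.ofReal V := by
  have hle : farthestDist X y ≤ ENNReal.ofReal √V :=
    iSup₂_le fun x hx => ENNReal.ofReal_le_ofReal ((Real.le_sqrt dist_nonneg hV).mpr (h x hx))
  calc farthestDist X y ^ 2 ≤ ENNReal.ofReal √V ^ 2 := pow_le_pow_left' hle 2
    _ = ENNReal.ofReal V := by rw [← ENNReal.ofReal_pow (Real.sqrt_nonneg V), Real.sq_sqrt hV]

lemma ofReal_dist_sq_le_farthestDist_sq {X : Set M} {x : M} (hx : x ∈ X) (y : M) :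
    ENNReal.ofReal (dist x y ^ 2) ≤ farthestDist X y ^ 2 := by
  rw [ENNReal.ofReal_pow dist_nonneg]
  exact pow_le_pow_left' (le_iSup₂ (f := fun x _ => ENNReal.ofReal (dist x y)) x hx) 2

lemma lintegral_dist_sq_le_farthestDist_sq [MeasurableSpace M] {X : Set M} {μ : Measure M}
    [IsProbabilityMeasure μ] (hμX : μ Xᶜ = 0) (y : M) :
    ∫⁻ a, ENNReal.ofReal (dist a y ^ 2) ∂μ ≤ farthestDist X y ^ 2 := by
  calc ∫⁻ a, ENNReal.ofReal (dist a y ^ 2) ∂μ ≤ ∫⁻ _, farthestDist X y ^ 2 ∂μ := by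
        refine lintegral_mono_ae ?_
        filter_upwards [ae_iff.mpr hμX] with a ha using ofReal_dist_sq_le_farthestDist_sq ha y
    _ = farthestDist X y ^ 2 := by simp

variable [MeasurableSpace M] [OpensMeasurableSpace M] {X : Set M} {μ : Measure M}

lemma integrable_dist_sq [IsFiniteMeasure μ] (hX : IsBounded X) (hμX : μ Xᶜ = 0) (z : M) :
    Integrable (fun a => dist a z ^ 2) μ := by
  obtain ⟨r, hr⟩ := (Metric.isBounded_iff_subset_closedBall z).mp hX
  refine (integrable_const (r ^ 2)).mono' (continuous_dist_sq z).aestronglyMeasurable ?_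
  filter_upwards [ae_iff.mpr hμX] with a ha
  rw [Real.norm_of_nonneg (sq_nonneg _)]
  exact pow_le_pow_left₀ dist_nonneg (Metric.mem_closedBall.mp (hr ha)) 2

lemma continuous_integral_dist_sq [IsFiniteMeasure μ] (hX : IsBounded X) (hμX : μ Xᶜ = 0) :
    Continuous fun z => ∫ a, dist a z ^ 2 ∂μ := by
  refine continuous_iff_continuousAt.mpr fun z₀ => ?_
  obtain ⟨r, hr⟩ := (Metric.isBounded_iff_subset_closedBall z₀).mp hX
  refine continuousAt_of_dominated
    (Eventually.of_forall fun z => (continuous_dist_sq z).aestronglyMeasurable)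
    ?_ (integrable_const ((r + 1) ^ 2))
    (Eventually.of_forall fun a => ((continuous_const.dist continuous_id).pow 2).continuousAt)
  filter_upwards [Metric.ball_mem_nhds z₀ one_pos] with z hz
  filter_upwards [ae_iff.mpr hμX] with a ha
  rw [Real.norm_of_nonneg (sq_nonneg _)]
  refine pow_le_pow_left₀ dist_nonneg ?_ 2
  linarith [dist_triangle a z₀ z, Metric.mem_closedBall.mp (hr ha), (Metric.mem_ball'.mp hz).le]

lemma isBarycenter_of_tendsto_isBarycenter_mixDirac [IsFiniteMeasure μ] (hX : IsBounded X)
    (hμX : μ Xᶜ = 0) {x : M} {t : ℕ → ℝ} {b : ℕ → M} {b₀ : M} (ht : Tendsto t atTop (𝓝 0))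
    (ht0 : ∀ n, 0 ≤ t n) (ht1 : ∀ n, t n ≤ 1) (hb : Tendsto b atTop (𝓝 b₀))
    (hbar : ∀ n, IsBarycenter (mixDirac μ (t n) x) (b n)) : IsBarycenter μ b₀ := by
  intro z
  set I := fun w => ∫ a, dist a w ^ 2 ∂μ
  have hmix : ∀ n w, ∫ a, dist a w ^ 2 ∂(mixDirac μ (t n) x) =
      (1 - t n) * I w + t n * dist x w ^ 2 := fun n w =>
    integral_mixDirac (integrable_dist_sq hX hμX w) (continuous_dist_sq w).stronglyMeasurable
      (ht0 n) (ht1 n)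
  have hle : ∀ n, (1 - t n) * I (b n) + t n * dist x (b n) ^ 2 ≤
      (1 - t n) * I z + t n * dist x z ^ 2 := fun n => by
    simpa only [hmix] using hbar n z
  have hI : Continuous I := continuous_integral_dist_sq hX hμX
  have hF : Continuous fun p : ℝ × M => (1 - p.1) * I p.2 + p.1 * dist x p.2 ^ 2 := by
    fun_prop
  have hL := (hF.tendsto (0, b₀)).comp (ht.prodMk_nhds hb)
  have hR := (hF.tendsto (0, z)).comp (ht.prodMk_nhds tendsto_const_nhds)
  simpa using le_of_tendsto_of_tendsto' hL hR hle

lemma measure_farthestDist_eq_one [IsProbabilityMeasure μ] (hμX : μ Xᶜ = 0) {y : M}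
    (hy : farthestDist X y ≠ ⊤)
    (h : farthestDist X y ^ 2 ≤ ∫⁻ a, ENNReal.ofReal (dist a y ^ 2) ∂μ) :
    μ {x | ENNReal.ofReal (dist x y) = farthestDist X y} = 1 := by
  have hmeas : Measurable fun a => ENNReal.ofReal (dist a y) :=
    ENNReal.measurable_ofReal.comp (continuous_id.dist continuous_const).measurable
  have hsq : ∀ᵐ a ∂μ, ENNReal.ofReal (dist a y ^ 2) = farthestDist X y ^ 2 := by
    refine ae_eq_of_ae_le_of_lintegral_le ?_ ?_ aemeasurable_const (by simpa using h)
    · filter_upwards [ae_iff.mpr hμX] with a ha using ofReal_dist_sq_le_farthestDist_sq ha y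
    · exact ne_top_of_le_ne_top (ENNReal.pow_ne_top hy)
        (lintegral_dist_sq_le_farthestDist_sq hμX y)
  have hae : ∀ᵐ a ∂μ, ENNReal.ofReal (dist a y) = farthestDist X y := by
    filter_upwards [hsq] with a ha
    rw [ENNReal.ofReal_pow dist_nonneg] at ha
    exact (ENNReal.pow_right_strictMono two_ne_zero).injective ha
  exact (prob_compl_eq_zero_iff (hmeas (measurableSet_singleton _))).mp (ae_iff.mp hae)

end PseudoMetric

section Metric

variable {M : Type*} [MetricSpace M] [MeasurableSpace M] {X : Set M} {μ : Measure M}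

lemma varE_eq_ofReal_integral (hint : ∀ z, Integrable (fun a => dist a z ^ 2) μ) {y : M}
    (hy : IsBarycenter μ y) : varE μ = ENNReal.ofReal (∫ a, dist a y ^ 2 ∂μ) := by
  have hlint : ∀ z, ∫⁻ a, ENNReal.ofReal (dist a z ^ 2) ∂μ =
      ENNReal.ofReal (∫ a, dist a z ^ 2 ∂μ) := fun z =>
    (ofReal_integral_eq_lintegral_ofReal (hint z) (ae_of_all _ fun _ => sq_nonneg _)).symm
  refine le_antisymm ((iInf_le _ y).trans_eq (hlint y)) (le_iInf fun z => ?_)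
  rw [hlint z]
  exact ENNReal.ofReal_le_ofReal (hy z)

variable [OpensMeasurableSpace M]

lemma dist_sq_le_of_isBarycenter_mixDirac [IsProbabilityMeasure μ] (hXm : MeasurableSet X)
    (hXb : IsBounded X) (hμX : μ Xᶜ = 0)
    (hmax : ∀ ν : Measure M, IsProbabilityMeasure ν → ν Xᶜ = 0 → varE ν ≤ varE μ)
    {y : M} (hy : IsBarycenter μ y) {x : M} (hx : x ∈ X) {t : ℝ} (ht0 : 0 < t) (ht1 : t ≤ 1)
    {b : M} (hb : IsBarycenter (mixDirac μ t x) b) :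
    dist x b ^ 2 ≤ ∫ a, dist a y ^ 2 ∂μ := by
  set ν := mixDirac μ t x
  have hν : IsProbabilityMeasure ν := isProbabilityMeasure_mixDirac ht0.le ht1
  have hνX : ν Xᶜ = 0 := mixDirac_compl_eq_zero hXm hμX hx
  set I := fun z => ∫ a, dist a z ^ 2 ∂μ
  have hνb : ∫ a, dist a b ^ 2 ∂ν = (1 - t) * I b + t * dist x b ^ 2 :=
    integral_mixDirac (integrable_dist_sq hXb hμX b) (continuous_dist_sq b).stronglyMeasurable
      ht0.le ht1
  have hvar : (1 - t) * I b + t * dist x b ^ 2 ≤ I y := by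
    have := hmax ν hν hνX
    rwa [varE_eq_ofReal_integral (integrable_dist_sq hXb hνX) hb,
      varE_eq_ofReal_integral (integrable_dist_sq hXb hμX) hy,
      ENNReal.ofReal_le_ofReal_iff (integral_nonneg fun _ => sq_nonneg _), hνb] at this
  have hIy : I y ≤ I b := hy b
  nlinarith

theorem dist_sq_le_integral_of_unique_barycenter [IsProbabilityMeasure μ]
    (hXm : MeasurableSet X) (hXb : IsBounded X) {K : Set M} (hK : IsCompact K)
    (hbary : ∀ ν : Measure M, IsProbabilityMeasure ν → ν Xᶜ = 0 → ∃ y ∈ K, IsBarycenter ν y)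
    (hμX : μ Xᶜ = 0)
    (hmax : ∀ ν : Measure M, IsProbabilityMeasure ν → ν Xᶜ = 0 → varE ν ≤ varE μ)
    {y : M} (hy : IsBarycenter μ y) (huniq : ∀ y', IsBarycenter μ y' → y' = y)
    {x : M} (hx : x ∈ X) : dist x y ^ 2 ≤ ∫ a, dist a y ^ 2 ∂μ := by
  set t : ℕ → ℝ := fun n => 1 / (n + 1)
  have ht0 : ∀ n, 0 < t n := fun n => by positivity
  have ht1 : ∀ n, t n ≤ 1 := fun n =>
    div_le_one_of_le₀ (by linarith [n.cast_nonneg (α := ℝ)]) (by positivity)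
  choose b hbK hb using fun n => hbary (mixDirac μ (t n) x)
    (isProbabilityMeasure_mixDirac (ht0 n).le (ht1 n)) (mixDirac_compl_eq_zero hXm hμX hx)
  obtain ⟨b₀, -, φ, hφ, hbφ⟩ := hK.tendsto_subseq hbK
  have htφ : Tendsto (t ∘ φ) atTop (𝓝 0) :=
    tendsto_one_div_add_atTop_nhds_zero_nat.comp hφ.tendsto_atTop
  obtain rfl : b₀ = y := huniq b₀ <|
    isBarycenter_of_tendsto_isBarycenter_mixDirac hXb hμX htφ (fun _ => (ht0 _).le)
      (fun _ => ht1 _) hbφ fun n => hb (φ n)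
  refine le_of_tendsto ((((continuous_const.dist continuous_id).pow 2).tendsto b₀).comp hbφ)
    (Eventually.of_forall fun n => ?_)
  exact dist_sq_le_of_isBarycenter_mixDirac hXm hXb hμX hmax hy hx (ht0 _) (ht1 _) (hb (φ n))

end Metric

theorem maxVariance_eq_circumradius_sq_general {M : Type*}
    [MetricSpace M] [MeasurableSpace M] [BorelSpace M]
    (X : Set M) (hX : IsCompact X)
    (hconv : IsCompact {y : M | ∃ μ : Measure M, IsProbabilityMeasure μ ∧ μ Xᶜ = 0 ∧
      ∀ z : M, (∫ x, dist x y ^ 2 ∂μ) ≤ ∫ x, dist x z ^ 2 ∂μ})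
    (hbary : ∀ μ : Measure M, IsProbabilityMeasure μ → μ Xᶜ = 0 →
      ∃ y : M, ∀ z : M, (∫ x, dist x y ^ 2 ∂μ) ≤ ∫ x, dist x z ^ 2 ∂μ)
    (huniq : ∃ μ : Measure M, IsProbabilityMeasure μ ∧ μ Xᶜ = 0 ∧
      (∀ μ' : Measure M, IsProbabilityMeasure μ' → μ' Xᶜ = 0 → varE μ' ≤ varE μ) ∧
      (∃! y : M, ∀ z : M, (∫ x, dist x y ^ 2 ∂μ) ≤ ∫ x, dist x z ^ 2 ∂μ))
    -- `y` is the circumcenter of `X`: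
    (y : M) (hy : (⨆ x ∈ X, ENNReal.ofReal (dist x y)) =
      ⨅ y' : M, ⨆ x ∈ X, ENNReal.ofReal (dist x y')) :
    (∃ μ : Measure M, IsProbabilityMeasure μ ∧ μ Xᶜ = 0 ∧
      (∀ μ' : Measure M, IsProbabilityMeasure μ' → μ' Xᶜ = 0 → varE μ' ≤ varE μ) ∧
      varE μ = (⨅ y' : M, ⨆ x ∈ X, ENNReal.ofReal (dist x y')) ^ 2) ∧
    (∀ μ : Measure M, IsProbabilityMeasure μ → μ Xᶜ = 0 →
      (∀ μ' : Measure M, IsProbabilityMeasure μ' → μ' Xᶜ = 0 → varE μ' ≤ varE μ) →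
      μ {x : M | ENNReal.ofReal (dist x y) =
        ⨅ y' : M, ⨆ x' ∈ X, ENNReal.ofReal (dist x' y')} = 1) := by
  obtain ⟨μ₀, hμ₀, hμ₀X, hmax, y₀, hy₀, hy₀_unique⟩ := huniq
  change farthestDist X y = ⨅ y', farthestDist X y' at hy
  have hfar : ∀ x ∈ X, dist x y₀ ^ 2 ≤ ∫ a, dist a y₀ ^ 2 ∂μ₀ := fun x hx =>
    dist_sq_le_integral_of_unique_barycenter hX.isClosed.measurableSet hX.isBounded hconv
      (fun ν hν hνX => (hbary ν hν hνX).imp fun b hb => ⟨⟨ν, hν, hνX, hb⟩, hb⟩)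
      hμ₀X hmax hy₀ hy₀_unique hx
  have hvar₀ : varE μ₀ = (⨅ y', farthestDist X y') ^ 2 := by
    refine le_antisymm
      ((iInf_le _ y).trans (hy ▸ lintegral_dist_sq_le_farthestDist_sq hμ₀X y)) ?_
    calc (⨅ y', farthestDist X y') ^ 2 ≤ farthestDist X y₀ ^ 2 :=
          pow_le_pow_left' (iInf_le _ _) 2
      _ ≤ ENNReal.ofReal (∫ a, dist a y₀ ^ 2 ∂μ₀) :=
        farthestDist_sq_le_ofReal (integral_nonneg fun _ => sq_nonneg _) hfar
      _ = varE μ₀ := (varE_eq_ofReal_integral (integrable_dist_sq hX.isBounded hμ₀X) hy₀).symm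
  refine ⟨⟨μ₀, hμ₀, hμ₀X, hmax, hvar₀⟩, fun μ hμ hμX hμmax => ?_⟩
  change μ {x | ENNReal.ofReal (dist x y) = ⨅ y', farthestDist X y'} = 1
  rw [← hy]
  refine measure_farthestDist_eq_one hμX (farthestDist_ne_top hX.isBounded y) ?_
  calc farthestDist X y ^ 2 = varE μ₀ := by rw [hvar₀, hy]
    _ ≤ varE μ := hμmax μ₀ hμ₀ hμ₀X
    _ ≤ ∫⁻ a, ENNReal.ofReal (dist a y ^ 2) ∂μ := iInf_le _ y

/-- If some variance-maximizing measure on `X` has a unique barycenter, then the maximal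
variance over `P(X)` equals `R²`, where `R` is the circumradius of `X`, and every
variance-maximizing measure gives full mass to the sphere `{x : d(x,y) = R}` around the
circumcenter `y`. -/
theorem maxVariance_eq_circumradius_sq {M : Type*}
    [MetricSpace M] [CompleteSpace M] [MeasurableSpace M] [BorelSpace M]
    (X : Set M) (hX : IsCompact X) (hXne : X.Nonempty)
    (hconv : IsCompact {y : M | ∃ μ : Measure M, IsProbabilityMeasure μ ∧ μ Xᶜ = 0 ∧
      ∀ z : M, (∫ x, dist x y ^ 2 ∂μ) ≤ ∫ x, dist x z ^ 2 ∂μ})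
    (hbary : ∀ μ : Measure M, IsProbabilityMeasure μ → μ Xᶜ = 0 →
      ∃ y : M, ∀ z : M, (∫ x, dist x y ^ 2 ∂μ) ≤ ∫ x, dist x z ^ 2 ∂μ)
    (huniq : ∃ μ : Measure M, IsProbabilityMeasure μ ∧ μ Xᶜ = 0 ∧
      (∀ μ' : Measure M, IsProbabilityMeasure μ' → μ' Xᶜ = 0 → varE μ' ≤ varE μ) ∧
      (∃! y : M, ∀ z : M, (∫ x, dist x y ^ 2 ∂μ) ≤ ∫ x, dist x z ^ 2 ∂μ))
    -- `y` is the circumcenter of `X`: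
    (y : M) (hy : (⨆ x ∈ X, ENNReal.ofReal (dist x y)) =
      ⨅ y' : M, ⨆ x ∈ X, ENNReal.ofReal (dist x y')) :
    (∃ μ : Measure M, IsProbabilityMeasure μ ∧ μ Xᶜ = 0 ∧
      (∀ μ' : Measure M, IsProbabilityMeasure μ' → μ' Xᶜ = 0 → varE μ' ≤ varE μ) ∧
      varE μ = (⨅ y' : M, ⨆ x ∈ X, ENNReal.ofReal (dist x y')) ^ 2) ∧
    (∀ μ : Measure M, IsProbabilityMeasure μ → μ Xᶜ = 0 →
      (∀ μ' : Measure M, IsProbabilityMeasure μ' → μ' Xᶜ = 0 → varE μ' ≤ varE μ) →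
      μ {x : M | ENNReal.ofReal (dist x y) =
        ⨅ y' : M, ⨆ x' ∈ X, ENNReal.ofReal (dist x' y')} = 1) :=
  maxVariance_eq_circumradius_sq_general X hX hconv hbary huniq y hy
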